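/- arXiv:2205.08482 — 2 statements merged into one kernel-verified Lean document; each statement's English description precedes it below -/
import Mathlib

section
/- Let φ : ℝⁿ → ℝ be a differentiable convex function such that 0 lies in the interior of the image ∇φ(ℝⁿ) of its gradient map. Then there exists a constant C > 0 such that φ(ξ) ≥ C⁻¹·|ξ| − C for all ξ ∈ ℝⁿ. In particular, φ is proper and bounded from below. -/
/-!
Each gradient value `g = ∇φ η` is the slope of an affine minorant `⟪g, ·⟫ - (⟪g, η⟫ - φ η)` of
`φ`. By compactness of the unit sphere, finitely many vectors `g` of norm less than any given
`ε > 0` suffice for every `ξ` to satisfy `⟪g, ξ⟫ ≥ c ‖ξ‖` for one of them. Choosing `ε` so that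
the ball of radius `ε` lies in the gradient image, the maximum of the corresponding minorants is
at least `c ‖ξ‖ - A`.
-/

open Set Metric Filter
open scoped RealInnerProductSpace

theorem ConvexOn.add_le_of_hasFDerivAt {E : Type*} [NormedAddCommGroup E] [NormedSpace ℝ E]
    {s : Set E} {φ : E → ℝ} {φ' : E →L[ℝ] ℝ} {x y : E} (hφ : ConvexOn ℝ s φ)
    (hx : x ∈ s) (hy : y ∈ s) (hφ' : HasFDerivAt φ φ' x) :
    φ x + φ' (y - x) ≤ φ y := by
  have hline : HasDerivAt (φ ∘ AffineMap.lineMap x y) (φ' (y - x)) (0 : ℝ) := by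
    rw [← AffineMap.lineMap_apply_zero (k := ℝ) x y] at hφ'
    exact hφ'.comp_hasDerivAt 0 AffineMap.hasDerivAt_lineMap
  have hslope := (hφ.comp_affineMap (AffineMap.lineMap x y)).le_slope_of_hasDerivAt
    (by simpa using hx) (by simpa using hy) zero_lt_one hline
  simp only [slope_def_field, Function.comp_apply, AffineMap.lineMap_apply_zero,
    AffineMap.lineMap_apply_one, sub_zero, div_one] at hslope
  linarith

theorem exists_pos_inv_mul_norm_sub_le_of_mul_norm_sub_le {E : Type*} [SeminormedAddGroup E]
    {φ : E → ℝ} {c A : ℝ} (hc : 0 < c) (hφ : ∀ ξ, c * ‖ξ‖ - A ≤ φ ξ) :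
    ∃ C > 0, ∀ ξ, φ ξ ≥ C⁻¹ * ‖ξ‖ - C := by
  refine ⟨max c⁻¹ A, lt_max_of_lt_left (inv_pos.2 hc), fun ξ => ?_⟩
  have hinv : (max c⁻¹ A)⁻¹ ≤ c := inv_le_of_inv_le₀ hc (le_max_left _ _)
  nlinarith [hφ ξ, le_max_right c⁻¹ A, norm_nonneg ξ]

variable {E : Type*} [NormedAddCommGroup E] [InnerProductSpace ℝ E]

theorem ConvexOn.exists_forall_inner_sub_le_of_subset_range_gradient [CompleteSpace E]
    {φ : E → ℝ} (hφ : ConvexOn ℝ univ φ) (hdiff : Differentiable ℝ φ) {s : Finset E}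
    (hs : ↑s ⊆ range (gradient φ)) : ∃ A, ∀ g ∈ s, ∀ ξ, ⟪g, ξ⟫ - A ≤ φ ξ := by
  refine (eventually_all_finset s (l := atTop)).2 (fun g hg => ?_) |>.exists
  obtain ⟨x, rfl⟩ := hs hg
  filter_upwards [eventually_ge_atTop (⟪gradient φ x, x⟫ - φ x)] with A hA ξ
  have hsupport := hφ.add_le_of_hasFDerivAt (mem_univ x) (mem_univ ξ)
    (hdiff x).hasGradientAt.hasFDerivAt
  rw [InnerProductSpace.toDual_apply_apply, inner_sub_right] at hsupport
  linarith

theorem exists_finset_subset_ball_forall_exists_le_inner [FiniteDimensional ℝ E] {ε : ℝ}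
    (hε : 0 < ε) :
    ∃ s : Finset E, (s : Set E) ⊆ ball 0 ε ∧ ∃ c > 0, ∀ ξ, ∃ g ∈ s, c * ‖ξ‖ ≤ ⟪g, ξ⟫ := by
  classical
  obtain ⟨t, ht, hcover⟩ := (isCompact_sphere (0 : E) 1).elim_nhds_subcover
    (fun u => {v | 1 / 2 < ⟪u, v⟫}) fun u hu => by
      refine (isOpen_lt continuous_const (continuous_const.inner continuous_id)).mem_nhds ?_
      norm_num [real_inner_self_eq_norm_sq, mem_sphere_zero_iff_norm.mp hu]
  -- `0` serves `ξ = 0`, for which `t` may be empty (when `E` is trivial).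
  refine ⟨insert 0 (t.image ((ε / 2) • ·)), ?_, ε / 4, by positivity, fun ξ => ?_⟩
  · intro g hg
    obtain rfl | ⟨v, hv, rfl⟩ : g = 0 ∨ ∃ v ∈ t, (ε / 2) • v = g := by simpa using hg
    · exact mem_ball_self hε
    · rw [mem_ball_zero_iff, norm_smul, mem_sphere_zero_iff_norm.mp (ht v hv),
        Real.norm_of_nonneg (by positivity)]
      linarith
  obtain rfl | hξ := eq_or_ne ξ 0
  · exact ⟨0, Finset.mem_insert_self _ _, by simp⟩
  have hu : ‖ξ‖⁻¹ • ξ ∈ sphere (0 : E) 1 := by simp [norm_smul, hξ]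
  obtain ⟨v, hv, hvu⟩ := mem_iUnion₂.mp (hcover hu)
  refine ⟨(ε / 2) • v, Finset.mem_insert_of_mem (Finset.mem_image_of_mem _ hv), ?_⟩
  have hvξ : ⟪v, ξ⟫ = ‖ξ‖ * ⟪v, ‖ξ‖⁻¹ • ξ⟫ := by
    rw [real_inner_smul_right, ← mul_assoc, mul_inv_cancel₀ (norm_ne_zero_iff.mpr hξ), one_mul]
  calc ε / 4 * ‖ξ‖ = ε / 2 * (‖ξ‖ * (1 / 2)) := by ring
    _ ≤ ε / 2 * (‖ξ‖ * ⟪v, ‖ξ‖⁻¹ • ξ⟫) := by gcongr; exact le_of_lt hvu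
    _ = ⟪(ε / 2) • v, ξ⟫ := by rw [real_inner_smul_left, hvξ]

theorem convex_linear_growth_of_zero_mem_interior_gradient_image {n : ℕ}
    (φ : EuclideanSpace ℝ (Fin n) → ℝ)
    (hconv : ConvexOn ℝ Set.univ φ)
    (hdiff : Differentiable ℝ φ)
    (h0 : (0 : EuclideanSpace ℝ (Fin n)) ∈ interior (Set.range (fun ξ => gradient φ ξ))) :
    ∃ C > 0, ∀ ξ, φ ξ ≥ C⁻¹ * ‖ξ‖ - C := by
  obtain ⟨ε, hε, hball⟩ := Metric.mem_nhds_iff.mp (mem_interior_iff_mem_nhds.mp h0)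
  obtain ⟨s, hs, c, hc, hcover⟩ :=
    exists_finset_subset_ball_forall_exists_le_inner (E := EuclideanSpace ℝ (Fin n)) hε
  obtain ⟨A, hA⟩ :=
    hconv.exists_forall_inner_sub_le_of_subset_range_gradient hdiff (hs.trans hball)
  refine exists_pos_inv_mul_norm_sub_le_of_mul_norm_sub_le hc (A := A) fun ξ => ?_
  obtain ⟨g, hg, hgξ⟩ := hcover ξ
  linarith [hA g hg ξ]
end

section
/- Let r₀ ≥ 1, ε ∈ (0,2), C > 0, and let v : [r₀, ∞) → ℝ be continuously differentiable with v(r) → 0 as r → ∞. Suppose that for all r ≥ r₀, 0 ≤ (d/dr)(e^{−r²/2}·v(r)) ≤ C·r^{1−ε}·e^{−r²/2}. Then −C·r^{−ε} ≤ v(r) ≤ 0 for all r ≥ r₀. -/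
/-!
The weighted function `exp (-r ^ 2 / 2) * v r` is nondecreasing and tends to `0`, hence is
nonpositive. For the lower bound, `r ^ (-ε) * exp (-r ^ 2 / 2)` has derivative at most
`-r ^ (1 - ε) * exp (-r ^ 2 / 2)` (the differential form of the Gaussian tail estimate), so adding
`C` times it to the weighted function gives a nonincreasing function tending to `0`, hence a
nonnegative one.
-/

open Real Filter

open Set Topology

lemma le_of_tendsto_atTop_of_hasDerivAt_nonneg {f f' : ℝ → ℝ} {a L : ℝ}
    (hf : ∀ x ≥ a, HasDerivAt f (f' x) x) (hf' : ∀ x ≥ a, 0 ≤ f' x)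
    (hlim : Tendsto f atTop (𝓝 L)) : ∀ x ≥ a, f x ≤ L := by
  have hmono : MonotoneOn f (Ici a) :=
    monotoneOn_of_hasDerivWithinAt_nonneg (convex_Ici a)
      (fun x hx => (hf x hx).continuousAt.continuousWithinAt)
      (fun x hx => (hf x (interior_subset hx)).hasDerivWithinAt)
      (fun x hx => hf' x (interior_subset hx))
  intro x hx
  refine ge_of_tendsto hlim ?_
  filter_upwards [eventually_ge_atTop x] with y hy
  exact hmono hx (hx.trans hy) hy

lemma ge_of_tendsto_atTop_of_hasDerivAt_nonpos {f f' : ℝ → ℝ} {a L : ℝ}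
    (hf : ∀ x ≥ a, HasDerivAt f (f' x) x) (hf' : ∀ x ≥ a, f' x ≤ 0)
    (hlim : Tendsto f atTop (𝓝 L)) : ∀ x ≥ a, L ≤ f x := by
  intro x hx
  simpa using le_of_tendsto_atTop_of_hasDerivAt_nonneg (fun y hy => (hf y hy).neg)
    (fun y hy => neg_nonneg.2 (hf' y hy)) hlim.neg x hx

lemma hasDerivAt_exp_neg_sq_div_two (x : ℝ) :
    HasDerivAt (fun x => exp (-x ^ 2 / 2)) (-x * exp (-x ^ 2 / 2)) x := by
  have h : HasDerivAt (fun x : ℝ => -x ^ 2 / 2) (-x) x :=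
    ((hasDerivAt_pow 2 x).fun_neg.div_const 2).congr_deriv (by push_cast; ring)
  exact h.exp.congr_deriv (by ring)

lemma tendsto_exp_neg_sq_div_two_atTop :
    Tendsto (fun x : ℝ => exp (-x ^ 2 / 2)) atTop (𝓝 0) :=
  tendsto_exp_atBot.comp <|
    (tendsto_neg_atBot_iff.2 (tendsto_pow_atTop two_ne_zero)).atBot_div_const two_pos

lemma hasDerivAt_rpow_neg_mul_exp_neg_sq_div_two {x : ℝ} (hx : 0 < x) (ε : ℝ) :
    HasDerivAt (fun x => x ^ (-ε) * exp (-x ^ 2 / 2))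
      (-(ε * x ^ (-ε - 1) + x ^ (1 - ε)) * exp (-x ^ 2 / 2)) x := by
  have h := (hasDerivAt_rpow_const (p := -ε) (Or.inl hx.ne')).fun_mul
    (hasDerivAt_exp_neg_sq_div_two x)
  have hpow : x ^ (-ε) * x = x ^ (1 - ε) := by
    rw [← rpow_add_one hx.ne']
    ring_nf
  exact h.congr_deriv (by rw [← hpow]; ring)

lemma tendsto_rpow_neg_mul_exp_neg_sq_div_two_atTop {ε : ℝ} (hε : 0 < ε) :
    Tendsto (fun x : ℝ => x ^ (-ε) * exp (-x ^ 2 / 2)) atTop (𝓝 0) := by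
  simpa using (tendsto_rpow_neg_atTop hε).mul tendsto_exp_neg_sq_div_two_atTop

theorem decay_from_gaussian_weighted_deriv_general (r₀ : ℝ) (hr₀ : 1 ≤ r₀) (ε : ℝ)
    (hε : ε ∈ Set.Ioo (0:ℝ) 2) (C : ℝ) (hC : 0 < C) (v g' : ℝ → ℝ)
    (hderiv : ∀ r ≥ r₀, HasDerivAt (fun r => Real.exp (-r ^ 2 / 2) * v r) (g' r) r)
    (hlow : ∀ r ≥ r₀, 0 ≤ g' r)
    (hup : ∀ r ≥ r₀, g' r ≤ C * r ^ (1 - ε) * Real.exp (-r ^ 2 / 2))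
    (hlim : Tendsto v atTop (nhds 0)) :
    ∀ r ≥ r₀, -C * r ^ (-ε) ≤ v r ∧ v r ≤ 0 := by
  have hpos : ∀ r ≥ r₀, 0 < r := fun r hr => by linarith
  have hweighted_lim : Tendsto (fun r => exp (-r ^ 2 / 2) * v r) atTop (𝓝 0) := by
    simpa using tendsto_exp_neg_sq_div_two_atTop.mul hlim
  have hweighted_nonpos :=
    le_of_tendsto_atTop_of_hasDerivAt_nonneg hderiv hlow hweighted_lim
  have hshifted_lim : Tendsto
      (fun r => exp (-r ^ 2 / 2) * v r + C * (r ^ (-ε) * exp (-r ^ 2 / 2))) atTop (𝓝 0) := by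
    simpa using hweighted_lim.add
      ((tendsto_rpow_neg_mul_exp_neg_sq_div_two_atTop hε.1).const_mul C)
  have hshifted_nonneg : ∀ r ≥ r₀,
      0 ≤ exp (-r ^ 2 / 2) * v r + C * (r ^ (-ε) * exp (-r ^ 2 / 2)) :=
    ge_of_tendsto_atTop_of_hasDerivAt_nonpos (fun r hr => (hderiv r hr).fun_add
      ((hasDerivAt_rpow_neg_mul_exp_neg_sq_div_two (hpos r hr) ε).const_mul C))
    (fun r hr => by
      have : 0 ≤ C * (ε * r ^ (-ε - 1) * exp (-r ^ 2 / 2)) :=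
        mul_nonneg hC.le <| mul_nonneg (mul_nonneg hε.1.le (rpow_nonneg (hpos r hr).le _))
          (exp_pos _).le
      linarith [hup r hr])
    hshifted_lim
  intro r hr
  have hexp := exp_pos (-r ^ 2 / 2)
  constructor
  · have h : 0 ≤ (v r + C * r ^ (-ε)) * exp (-r ^ 2 / 2) := by
      linear_combination hshifted_nonneg r hr
    linarith [(mul_nonneg_iff_of_pos_right hexp).1 h]
  · exact nonpos_of_mul_nonpos_right (hweighted_nonpos r hr) hexp

theorem decay_from_gaussian_weighted_deriv (r₀ : ℝ) (hr₀ : 1 ≤ r₀) (ε : ℝ)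
    (hε : ε ∈ Set.Ioo (0:ℝ) 2) (C : ℝ) (hC : 0 < C) (v g' : ℝ → ℝ)
    (hderiv : ∀ r ≥ r₀, HasDerivAt (fun r => Real.exp (-r ^ 2 / 2) * v r) (g' r) r)
    (hcont : ContinuousOn g' (Set.Ici r₀))
    (hlow : ∀ r ≥ r₀, 0 ≤ g' r)
    (hup : ∀ r ≥ r₀, g' r ≤ C * r ^ (1 - ε) * Real.exp (-r ^ 2 / 2))
    (hlim : Tendsto v atTop (nhds 0)) :
    ∀ r ≥ r₀, -C * r ^ (-ε) ≤ v r ∧ v r ≤ 0 :=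
  decay_from_gaussian_weighted_deriv_general r₀ hr₀ ε hε C hC v g' hderiv hlow hup hlim
end
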